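/- Let t ∈ ℝ with 0 < t < 1, F = 2√(t/(1−t²)), and define h₁(z) = 2·U_F(z)/F + t·z − conj(z) on ℂ ∖ [−F,F]. Then h₁(z₀) = 0 for every z₀ ∈ ∂E_t (and consequently also h₁(conj z₀) = 0 for every z₀ ∈ ∂E_t). -/

import Mathlib

open scoped Classical

/-- The real segment `[−F, F]` viewed as a subset of `ℂ`. -/
def segC (F : ℝ) : Set ℂ := {z : ℂ | z.im = 0 ∧ -F ≤ z.re ∧ z.re ≤ F}

/-- `ℂ⁺`: the open right half-plane together with the nonnegative imaginary axis. -/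
def Cplus : Set ℂ := {z : ℂ | 0 < z.re ∨ (z.re = 0 ∧ 0 ≤ z.im)}

/-- `U_F(z) = (z ∓ √(z²−F²))/F`, with `−` on `ℂ⁺` and `+` off `ℂ⁺`
(principal branch of the square root). -/
noncomputable def funU (F : ℝ) (z : ℂ) : ℂ :=
  if z ∈ Cplus then (z - (z ^ 2 - (F : ℂ) ^ 2) ^ ((1 : ℂ) / 2)) / F
  else (z + (z ^ 2 - (F : ℂ) ^ 2) ^ ((1 : ℂ) / 2)) / F

/-- `T_F(z) = ±√(z²−F²)`, with `+` on `ℂ⁺` and `−` off `ℂ⁺`. -/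
noncomputable def funT (F : ℝ) (z : ℂ) : ℂ :=
  if z ∈ Cplus then (z ^ 2 - (F : ℂ) ^ 2) ^ ((1 : ℂ) / 2)
  else -((z ^ 2 - (F : ℂ) ^ 2) ^ ((1 : ℂ) / 2))

/-- `W_F(z) = ((z+F)/(z−F))^{1/4} + ((z−F)/(z+F))^{1/4}` (principal fourth roots). -/
noncomputable def funW (F : ℝ) (z : ℂ) : ℂ :=
  ((z + F) / (z - F)) ^ ((1 : ℂ) / 4) + ((z - F) / (z + F)) ^ ((1 : ℂ) / 4)

/-- The distance `F = 2√(t/(1−t²))` of the foci of the ellipse from the origin. -/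
noncomputable def focF (t : ℝ) : ℝ := 2 * Real.sqrt (t / (1 - t ^ 2))

/-- The major semi-axis `a_t = √((1+t)/(1−t))`. -/
noncomputable def semiA (t : ℝ) : ℝ := Real.sqrt ((1 + t) / (1 - t))

/-- The minor semi-axis `b_t = √((1−t)/(1+t))`. -/
noncomputable def semiB (t : ℝ) : ℝ := Real.sqrt ((1 - t) / (1 + t))

/-- The ellipse `∂E_t = {x+iy : x²/a_t² + y²/b_t² = 1}`. -/
def ellipseBd (t : ℝ) : Set ℂ :=
  {z : ℂ | z.re ^ 2 / semiA t ^ 2 + z.im ^ 2 / semiB t ^ 2 = 1}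

/-- The open interior `E_t = {x+iy : x²/a_t² + y²/b_t² < 1}` of the ellipse. -/
def ellipseInt (t : ℝ) : Set ℂ :=
  {z : ℂ | z.re ^ 2 / semiA t ^ 2 + z.im ^ 2 / semiB t ^ 2 < 1}

/-- `h₁(z) = 2·U_F(z)/F + t·z − conj z` with `F = 2√(t/(1−t²))`. -/
noncomputable def hOne (t : ℝ) (z : ℂ) : ℂ :=
  2 * funU (focF t) z / (focF t : ℂ) + (t : ℂ) * z - (starRingEnd ℂ) z

/-! Write a point of `∂E_t` as `z = a u + i b v` with `u² + v² = 1`, `a = a_t`, `b = b_t`.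
Since `a² − b² = F²`, the point `w = b u + i a v` satisfies `w² = z² − F²` and lies in the same
half-plane as `z`, so it is the branch of `√(z² − F²)` chosen in `U_F`, and `U_F(z) = (z − w)/F`.
The real and imaginary parts of `h₁(z)` then vanish because
`2 (a − b) = (1 − t) a F² = (1 + t) b F²`, both being `√(1 − t²) F²`. -/

open Complex ComplexConjugate

lemma neg_mem_Cplus_of_notMem {w : ℂ} (hw : w ∉ Cplus) : -w ∈ Cplus := by
  simp only [Cplus, Set.mem_ofPred_eq, not_or, not_and, not_le, not_lt] at hw ⊢
  rw [neg_re, neg_im]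
  rcases hw.1.lt_or_eq with h | h
  · exact Or.inl (neg_pos.2 h)
  · exact Or.inr ⟨by rw [h, neg_zero], (neg_pos.2 (hw.2 h)).le⟩

lemma sq_cpow_half_of_mem_Cplus {w : ℂ} (hw : w ∈ Cplus) : (w ^ 2) ^ ((1 : ℂ) / 2) = w := by
  rw [one_div]
  refine pow_cpow_ofNat_inv (neg_pi_div_two_lt_arg_iff.2 ?_) (arg_le_pi_div_two_iff.2 ?_)
  · rcases hw with h | h
    exacts [Or.inl h, Or.inr h.2]
  · rcases hw with h | h
    exacts [Or.inl h.le, Or.inl h.1.ge]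

lemma funU_eq_of_sq_eq {F : ℝ} {z w : ℂ} (hw : w ^ 2 = z ^ 2 - F ^ 2)
    (hzw : w ∈ Cplus ↔ z ∈ Cplus) : funU F z = (z - w) / F := by
  rw [funU, ← hw]
  split_ifs with hz
  · rw [sq_cpow_half_of_mem_Cplus (hzw.2 hz)]
  · rw [← neg_sq, sq_cpow_half_of_mem_Cplus (neg_mem_Cplus_of_notMem (hzw.not.2 hz)),
      ← sub_eq_add_neg]

lemma mk_mul_mem_Cplus_iff {p q : ℝ} (hp : 0 < p) (hq : 0 < q) (u v : ℝ) :
    (⟨p * u, q * v⟩ : ℂ) ∈ Cplus ↔ (⟨u, v⟩ : ℂ) ∈ Cplus := by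
  simp only [Cplus, Set.mem_ofPred_eq, mul_pos_iff_of_pos_left hp, mul_eq_zero, hp.ne',
    false_or, mul_nonneg_iff_of_pos_left hq]

lemma exists_eq_mk_of_mem_ellipse {a b : ℝ} (ha : a ≠ 0) (hb : b ≠ 0) {z : ℂ}
    (hz : z.re ^ 2 / a ^ 2 + z.im ^ 2 / b ^ 2 = 1) :
    ∃ u v : ℝ, u ^ 2 + v ^ 2 = 1 ∧ z = ⟨a * u, b * v⟩ :=
  ⟨z.re / a, z.im / b, by rw [div_pow, div_pow, hz], Complex.ext (by field_simp) (by field_simp)⟩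

lemma funU_mk_of_sq_sub_sq {a b F u v : ℝ} (ha : 0 < a) (hb : 0 < b)
    (hF : a ^ 2 - b ^ 2 = F ^ 2) (huv : u ^ 2 + v ^ 2 = 1) :
    funU F ⟨a * u, b * v⟩ = (⟨a * u, b * v⟩ - ⟨b * u, a * v⟩) / F := by
  have hsq : (⟨b * u, a * v⟩ : ℂ) ^ 2 = (⟨a * u, b * v⟩ : ℂ) ^ 2 - F ^ 2 := by
    apply Complex.ext
    · simp only [sq, mul_re, sub_re, ofReal_re, ofReal_im, mul_zero, sub_zero]
      linear_combination (-(u ^ 2 + v ^ 2)) * hF - F ^ 2 * huv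
    · simp only [sq, mul_im, sub_im, ofReal_re, ofReal_im, mul_zero, zero_mul, add_zero, sub_zero]
      ring
  exact funU_eq_of_sq_eq hsq (by rw [mk_mul_mem_Cplus_iff hb ha, mk_mul_mem_Cplus_iff ha hb])

section Ellipse

variable {t : ℝ}

lemma one_sub_mul_semiA (ht0 : -1 < t) (ht1 : t < 1) : (1 - t) * semiA t = √(1 - t ^ 2) := by
  calc (1 - t) * semiA t = √(((1 - t) * semiA t) ^ 2) :=
        (Real.sqrt_sq (mul_nonneg (by linarith) (Real.sqrt_nonneg _))).symm
    _ = √(1 - t ^ 2) := by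
        rw [mul_pow, semiA, Real.sq_sqrt (div_nonneg (by linarith) (by linarith))]
        congr 1
        field_simp [(by linarith : 1 - t ≠ 0)]
        ring

lemma one_add_mul_semiB (ht0 : -1 < t) (ht1 : t < 1) : (1 + t) * semiB t = √(1 - t ^ 2) := by
  calc (1 + t) * semiB t = √(((1 + t) * semiB t) ^ 2) :=
        (Real.sqrt_sq (mul_nonneg (by linarith) (Real.sqrt_nonneg _))).symm
    _ = √(1 - t ^ 2) := by
        rw [mul_pow, semiB, Real.sq_sqrt (div_nonneg (by linarith) (by linarith))]
        congr 1
        field_simp [(by linarith : 1 + t ≠ 0)]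
        ring

lemma focF_sq (ht0 : 0 ≤ t) (ht1 : t < 1) : focF t ^ 2 = 4 * t / (1 - t ^ 2) := by
  rw [focF, mul_pow, Real.sq_sqrt (div_nonneg ht0 (by nlinarith))]
  ring

lemma semiA_sq_sub_semiB_sq (ht0 : 0 ≤ t) (ht1 : t < 1) :
    semiA t ^ 2 - semiB t ^ 2 = focF t ^ 2 := by
  rw [semiA, semiB, Real.sq_sqrt (div_nonneg (by linarith) (by linarith)),
    Real.sq_sqrt (div_nonneg (by linarith) (by linarith)), focF_sq ht0 ht1]
  field_simp [(by linarith : 1 - t ≠ 0), (by linarith : 1 + t ≠ 0), (by nlinarith : 1 - t ^ 2 ≠ 0)]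
  ring

lemma two_mul_semiA_sub_semiB (ht0 : 0 ≤ t) (ht1 : t < 1) :
    2 * (semiA t - semiB t) = √(1 - t ^ 2) * focF t ^ 2 := by
  have hA : semiA t = √(1 - t ^ 2) / (1 - t) := by
    rw [← one_sub_mul_semiA (by linarith) ht1]
    field_simp [(by linarith : 1 - t ≠ 0)]
  have hB : semiB t = √(1 - t ^ 2) / (1 + t) := by
    rw [← one_add_mul_semiB (by linarith) ht1]
    field_simp [(by linarith : 1 + t ≠ 0)]
  rw [hA, hB, focF_sq ht0 ht1]
  field_simp [(by linarith : 1 - t ≠ 0), (by linarith : 1 + t ≠ 0), (by nlinarith : 1 - t ^ 2 ≠ 0)]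
  ring

lemma conj_mem_ellipseBd {z : ℂ} (hz : z ∈ ellipseBd t) : conj z ∈ ellipseBd t := by
  simpa only [ellipseBd, Set.mem_ofPred_eq, conj_re, conj_im, neg_sq] using hz

end Ellipse

theorem hOne_eq_zero_of_mem_ellipseBd {t : ℝ} (ht0 : 0 < t) (ht1 : t < 1) {z : ℂ}
    (hz : z ∈ ellipseBd t) : hOne t z = 0 := by
  have ha : 0 < semiA t := Real.sqrt_pos_of_pos (div_pos (by linarith) (by linarith))
  have hb : 0 < semiB t := Real.sqrt_pos_of_pos (div_pos (by linarith) (by linarith))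
  have hF : focF t ≠ 0 := (mul_pos two_pos (Real.sqrt_pos_of_pos (div_pos ht0 (by nlinarith)))).ne'
  obtain ⟨u, v, huv, rfl⟩ := exists_eq_mk_of_mem_ellipse ha.ne' hb.ne' hz
  have hA := one_sub_mul_semiA (by linarith) ht1
  have hB := one_add_mul_semiB (by linarith) ht1
  have hAB := two_mul_semiA_sub_semiB ht0.le ht1
  rw [hOne, funU_mk_of_sq_sub_sq ha hb (semiA_sq_sub_semiB_sq ht0.le ht1) huv]
  apply Complex.ext
  · simp only [sub_re, add_re, div_ofReal_re, mul_re, re_ofNat, im_ofNat, div_ofReal_im, sub_im,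
      zero_mul, sub_zero, ofReal_re, ofReal_im, conj_re, zero_re]
    field_simp
    linear_combination u * hAB - u * focF t ^ 2 * hA
  · simp only [sub_im, add_im, div_ofReal_im, mul_im, re_ofNat, im_ofNat, div_ofReal_re, sub_re,
      zero_mul, add_zero, ofReal_re, ofReal_im, conj_im, sub_neg_eq_add, zero_im]
    field_simp
    linear_combination -v * hAB + v * focF t ^ 2 * hB

/-- `h₁` vanishes on the ellipse `∂E_t`, and also at the conjugates of
points of `∂E_t`. -/
theorem stmt12 (t : ℝ) (ht0 : 0 < t) (ht1 : t < 1) :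
    ∀ z₀ ∈ ellipseBd t, hOne t z₀ = 0 ∧ hOne t ((starRingEnd ℂ) z₀) = 0 := fun _ hz₀ =>
  ⟨hOne_eq_zero_of_mem_ellipseBd ht0 ht1 hz₀,
    hOne_eq_zero_of_mem_ellipseBd ht0 ht1 (conj_mem_ellipseBd hz₀)⟩
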